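/- Let f : ℝᵈ → ℝ be subdifferentiable at a point p (i.e. the directional derivative in every direction g equals max over a convex compact set ∂f(p) of ⟨v, g⟩) and locally Lipschitz continuous in a neighborhood of p with constant L. Then f is uniformly subdifferentiable at p: for every ε > 0 there exist δ > 0 and α₀ > 0 such that for all directions ḡ with ‖ḡ − g‖ ≤ δ and all α ∈ (0, α₀), |f(p + αḡ) − f(p) − α·maxᵥ∈∂f(p)⟨v, ḡ⟩| < αε. -/

import Mathlib

open Filter Topology Metric
open scoped RealInnerProductSpace

/-- A function subdifferentiable at `p` and locally Lipschitz near `p`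
is uniformly subdifferentiable at `p`. -/
theorem stmt1 (d : ℕ) (f : EuclideanSpace ℝ (Fin d) → ℝ)
    (p : EuclideanSpace ℝ (Fin d))
    (S : Set (EuclideanSpace ℝ (Fin d)))
    (hS : S.Nonempty) (hconv : Convex ℝ S) (hcomp : IsCompact S)
    -- subdifferentiability at p: for every direction the one-sided directional
    -- derivative exists and equals the maximum of ⟨v, g⟩ over v ∈ S
    (hsub : ∀ g : EuclideanSpace ℝ (Fin d), ∃ m : ℝ,
      IsGreatest ((fun v => ⟪v, g⟫) '' S) m ∧
      Tendsto (fun α : ℝ => (f (p + α • g) - f p) / α) (𝓝[>] 0) (𝓝 m))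
    -- local Lipschitz continuity near p with constant L
    (L : NNReal) (ρ : ℝ) (hρ : 0 < ρ) (hLip : LipschitzOnWith L f (ball p ρ)) :
    ∀ g : EuclideanSpace ℝ (Fin d), ∀ ε > (0 : ℝ), ∃ δ > (0 : ℝ), ∃ α₀ > (0 : ℝ),
      ∀ gbar : EuclideanSpace ℝ (Fin d), ‖gbar - g‖ ≤ δ →
        ∀ α ∈ Set.Ioo (0 : ℝ) α₀,
          |f (p + α • gbar) - f p - α * sSup ((fun v => ⟪v, gbar⟫) '' S)| < α * ε := by
  intro g ε hε
  -- bound on S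
  obtain ⟨C, hC⟩ := (isBounded_iff_forall_norm_le).mp hcomp.isBounded
  set M : ℝ := max C 0 with hMdef
  have hM0 : 0 ≤ M := le_max_right _ _
  have hMb : ∀ v ∈ S, ‖v‖ ≤ M := fun v hv => (hC v hv).trans (le_max_left _ _)
  obtain ⟨m, hmG, htend⟩ := hsub g
  -- δ
  set δ : ℝ := min 1 (ε / (2 * ((L : ℝ) + M + 1))) with hδdef
  have hden : (0:ℝ) < 2 * ((L : ℝ) + M + 1) := by positivity
  have hδpos : 0 < δ := lt_min one_pos (by positivity)
  have hδkey : ((L : ℝ) + M) * δ ≤ ε / 2 := by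
    have h1 : δ ≤ ε / (2 * ((L : ℝ) + M + 1)) := min_le_right _ _
    have h2 : ((L : ℝ) + M) * δ ≤ ((L : ℝ) + M) * (ε / (2 * ((L : ℝ) + M + 1))) := by
      apply mul_le_mul_of_nonneg_left h1 (by positivity)
    have h3 : ((L : ℝ) + M) * (ε / (2 * ((L : ℝ) + M + 1))) ≤ ε / 2 := by
      rw [← mul_div_assoc, div_le_div_iff₀ hden two_pos]
      nlinarith [hε.le, NNReal.coe_nonneg L]
    linarith
  -- α₁ from the limit
  have := Metric.tendsto_nhdsWithin_nhds.mp htend (ε/2) (by linarith)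
  obtain ⟨α₁, hα₁pos, hα₁⟩ := this
  set α₀ : ℝ := min α₁ (ρ / (‖g‖ + δ + 1)) with hα₀def
  have hα₀pos : 0 < α₀ := lt_min hα₁pos (by positivity)
  refine ⟨δ, hδpos, α₀, hα₀pos, ?_⟩
  intro gbar hgbar α ⟨hα0, hαα₀⟩
  -- points are in the ball
  have hgbarnorm : ‖gbar‖ ≤ ‖g‖ + δ := by
    calc ‖gbar‖ = ‖g + (gbar - g)‖ := by rw [add_sub_cancel]
    _ ≤ ‖g‖ + ‖gbar - g‖ := norm_add_le _ _
    _ ≤ ‖g‖ + δ := by linarith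
  have hαρ : α * (‖g‖ + δ + 1) < ρ := by
    have h1 : α < ρ / (‖g‖ + δ + 1) := lt_of_lt_of_le hαα₀ (min_le_right _ _)
    have h2 : (0:ℝ) < ‖g‖ + δ + 1 := by positivity
    calc α * (‖g‖ + δ + 1) < (ρ / (‖g‖ + δ + 1)) * (‖g‖ + δ + 1) :=
      mul_lt_mul_of_pos_right h1 h2
    _ = ρ := div_mul_cancel₀ _ (ne_of_gt h2)
  have hmem1 : p + α • gbar ∈ ball p ρ := by
    rw [mem_ball, dist_eq_norm]
    simp only [add_sub_cancel_left, norm_smul, Real.norm_eq_abs, abs_of_pos hα0]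
    have : α * ‖gbar‖ ≤ α * (‖g‖ + δ) := mul_le_mul_of_nonneg_left hgbarnorm hα0.le
    nlinarith
  have hmem2 : p + α • g ∈ ball p ρ := by
    rw [mem_ball, dist_eq_norm]
    simp only [add_sub_cancel_left, norm_smul, Real.norm_eq_abs, abs_of_pos hα0]
    have hg : ‖g‖ ≤ ‖g‖ + δ := by linarith
    nlinarith [norm_nonneg g]
  -- term 1 : Lipschitz
  have ht1 : |f (p + α • gbar) - f (p + α • g)| ≤ (L : ℝ) * (α * δ) := by
    have := hLip.dist_le_mul _ hmem1 _ hmem2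
    rw [Real.dist_eq] at this
    have hd : dist (p + α • gbar) (p + α • g) = α * ‖gbar - g‖ := by
      rw [dist_eq_norm]
      have : (p + α • gbar) - (p + α • g) = α • (gbar - g) := by
        module
      rw [this, norm_smul, Real.norm_eq_abs, abs_of_pos hα0]
    rw [hd] at this
    calc |f (p + α • gbar) - f (p + α • g)| ≤ (L : ℝ) * (α * ‖gbar - g‖) := this
    _ ≤ (L : ℝ) * (α * δ) := by
        apply mul_le_mul_of_nonneg_left _ (NNReal.coe_nonneg L)
        exact mul_le_mul_of_nonneg_left hgbar hα0.le
  -- term 2 : directional derivative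
  have ht2 : |f (p + α • g) - f p - α * m| < α * (ε / 2) := by
    have hmem : α ∈ Set.Ioi (0:ℝ) := hα0
    have hdist : dist α 0 < α₁ := by
      rw [Real.dist_eq, sub_zero, abs_of_pos hα0]
      exact lt_of_lt_of_le hαα₀ (min_le_left _ _)
    have := hα₁ hmem hdist
    rw [Real.dist_eq] at this
    have heq : f (p + α • g) - f p - α * m = α * ((f (p + α • g) - f p)/α - m) := by
      field_simp
    rw [heq, abs_mul, abs_of_pos hα0]
    exact mul_lt_mul_of_pos_left this hα0
  -- compare sups
  set s : ℝ := sSup ((fun v => ⟪v, gbar⟫) '' S) with hsdef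
  have hSne : ((fun v => ⟪v, gbar⟫) '' S).Nonempty := hS.image _
  have hdiff : ∀ v ∈ S, |⟪v, gbar⟫ - ⟪v, g⟫| ≤ M * δ := by
    intro v hv
    have : ⟪v, gbar⟫ - ⟪v, g⟫ = ⟪v, gbar - g⟫ := by
      rw [inner_sub_right]
    rw [this]
    calc |⟪v, gbar - g⟫| ≤ ‖v‖ * ‖gbar - g‖ := abs_real_inner_le_norm _ _
    _ ≤ M * δ := mul_le_mul (hMb v hv) hgbar (norm_nonneg _) hM0
  have hub : ∀ x ∈ (fun v => ⟪v, gbar⟫) '' S, x ≤ m + M * δ := by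
    rintro x ⟨v, hv, rfl⟩
    have h1 := hdiff v hv
    have h2 : ⟪v, g⟫ ≤ m := hmG.2 ⟨v, hv, rfl⟩
    have := abs_le.mp h1
    linarith [this.2]
  have hbdd : BddAbove ((fun v => ⟪v, gbar⟫) '' S) := ⟨m + M * δ, hub⟩
  have hsle : s ≤ m + M * δ := csSup_le hSne hub
  have hsge : m - M * δ ≤ s := by
    obtain ⟨v₀, hv₀, hv₀eq⟩ := hmG.1
    have h1 := hdiff v₀ hv₀
    have h2 : ⟪v₀, gbar⟫ ≤ s := le_csSup hbdd ⟨v₀, hv₀, rfl⟩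
    have := abs_le.mp h1
    rw [← hv₀eq]
    linarith [this.1]
  have ht3 : |α * (m - s)| ≤ α * (M * δ) := by
    rw [abs_mul, abs_of_pos hα0]
    apply mul_le_mul_of_nonneg_left _ hα0.le
    rw [abs_le]; constructor <;> linarith
  -- combine
  have hsplit : f (p + α • gbar) - f p - α * s =
      (f (p + α • gbar) - f (p + α • g)) + (f (p + α • g) - f p - α * m) + α * (m - s) := by
    ring
  calc |f (p + α • gbar) - f p - α * s|
      ≤ |f (p + α • gbar) - f (p + α • g)| + |f (p + α • g) - f p - α * m| + |α * (m - s)| := by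
        rw [hsplit]; exact (abs_add_le _ _).trans (add_le_add_left (abs_add_le _ _) _)
  _ < (L : ℝ) * (α * δ) + α * (ε / 2) + α * (M * δ) := by linarith
  _ = α * (((L : ℝ) + M) * δ + ε / 2) := by ring
  _ ≤ α * ε := by
      apply mul_le_mul_of_nonneg_left _ hα0.le
      linarith
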